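/- For s,t ≥ 2, the grid graph P_s □ P_t (Cartesian product of paths) satisfies edim_f(P_s □ P_t) = 2. -/

import Mathlib

open Finset
open scoped Classical

variable {V : Type*}

/-- Distance from a vertex to an edge: minimum distance to an endpoint. -/
noncomputable def SimpleGraph.edgeDist (G : SimpleGraph V) (e : Sym2 V) (v : V) : ℕ :=
  Sym2.lift ⟨fun a b => min (G.dist a v) (G.dist b v), fun a b => min_comm _ _⟩ e

/-- A set of vertices is an edge resolving set if every pair of distinct edges
is distinguished by some vertex of the set. -/
def SimpleGraph.IsEdgeResolvingSet (G : SimpleGraph V) (S : Set V) : Prop :=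
  ∀ e₁ ∈ G.edgeSet, ∀ e₂ ∈ G.edgeSet, e₁ ≠ e₂ →
    ∃ s ∈ S, G.edgeDist e₁ s ≠ G.edgeDist e₂ s

/-- The edge dimension: minimum cardinality of an edge resolving set. -/
noncomputable def SimpleGraph.edim (G : SimpleGraph V) [Fintype V] : ℕ :=
  sInf {n | ∃ S : Finset V, G.IsEdgeResolvingSet ↑S ∧ S.card = n}

/-- An edge resolving function: a `[0,1]`-valued weighting of the vertices such
that every pair of distinct edges is resolved by total weight at least 1. -/
def SimpleGraph.IsEdgeResolvingFunction (G : SimpleGraph V) [Fintype V] (g : V → ℝ) : Prop :=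
  (∀ v, 0 ≤ g v ∧ g v ≤ 1) ∧
  ∀ e₁ ∈ G.edgeSet, ∀ e₂ ∈ G.edgeSet, e₁ ≠ e₂ →
    1 ≤ ∑ z ∈ Finset.univ.filter (fun z => G.edgeDist e₁ z ≠ G.edgeDist e₂ z), g z

/-- The fractional edge dimension. -/
noncomputable def SimpleGraph.edimf (G : SimpleGraph V) [Fintype V] : ℝ :=
  sInf {x | ∃ g : V → ℝ, G.IsEdgeResolvingFunction g ∧ ∑ v, g v = x}

/-!
Two corners on a common side, with weight 1 each, already resolve every edge. Conversely, at a
corner `c` the two edges leaving `c` are resolved only by the vertices sharing exactly one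
coordinate with `c`. Every vertex does so for at most two of the four corners, so summing the four
constraints `1 ≤ ∑_{z resolving} g z` gives `4 ≤ 2 ∑ g`.
-/

namespace SimpleGraph

section EdgeResolving

variable {G : SimpleGraph V}

lemma edgeDist_mk (u v z : V) : G.edgeDist s(u, v) z = min (G.dist u z) (G.dist v z) := rfl

variable [Fintype V]

lemma IsEdgeResolvingSet.exists_isEdgeResolvingFunction_sum_eq_card {S : Finset V}
    (hS : G.IsEdgeResolvingSet S) : ∃ g : V → ℝ, G.IsEdgeResolvingFunction g ∧ ∑ v, g v = #S := by
  refine ⟨fun v => if v ∈ S then 1 else 0, ⟨fun v => by dsimp only; split_ifs <;> norm_num,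
    fun e₁ he₁ e₂ he₂ hne => ?_⟩, by rw [sum_ite_mem, univ_inter, sum_const, nsmul_one]⟩
  obtain ⟨z, hzS, hz⟩ := hS e₁ he₁ e₂ he₂ hne
  calc (1 : ℝ) = if z ∈ S then 1 else 0 := by simp [mem_coe.mp hzS]
    _ ≤ _ := single_le_sum (f := fun v => if v ∈ S then (1 : ℝ) else 0)
      (fun v _ => by split_ifs <;> norm_num) (by simpa using hz)

lemma IsEdgeResolvingFunction.card_le_mul_sum {g : V → ℝ} (hg : G.IsEdgeResolvingFunction g)
    {ι : Type*} [Fintype ι] {e₁ e₂ : ι → Sym2 V} (he₁ : ∀ i, e₁ i ∈ G.edgeSet)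
    (he₂ : ∀ i, e₂ i ∈ G.edgeSet) (hne : ∀ i, e₁ i ≠ e₂ i) {m : ℕ}
    (hm : ∀ z, #{i | G.edgeDist (e₁ i) z ≠ G.edgeDist (e₂ i) z} ≤ m) :
    (Fintype.card ι : ℝ) ≤ m * ∑ v, g v := by
  calc (Fintype.card ι : ℝ) = ∑ _ : ι, (1 : ℝ) := by simp
    _ ≤ ∑ i, ∑ z with G.edgeDist (e₁ i) z ≠ G.edgeDist (e₂ i) z, g z :=
      sum_le_sum fun i _ => hg.2 _ (he₁ i) _ (he₂ i) (hne i)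
    _ = ∑ z, (#{i | G.edgeDist (e₁ i) z ≠ G.edgeDist (e₂ i) z} : ℝ) * g z := by
      simp_rw [sum_filter]
      rw [sum_comm]
      simp_rw [← sum_filter, sum_const, nsmul_eq_mul]
    _ ≤ ∑ z, (m : ℝ) * g z := by
      gcongr with z
      · exact (hg.1 z).1
      · exact_mod_cast hm z
    _ = m * ∑ v, g v := (mul_sum ..).symm

end EdgeResolving

section Leaf

variable {G : SimpleGraph V} {a a' z : V}

lemma Reachable.dist_eq_dist_add_one_of_neighborSet_eq (hr : G.Reachable a z) (hz : z ≠ a)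
    (ha : G.neighborSet a = {a'}) : G.dist a z = G.dist a' z + 1 := by
  obtain ⟨w, hw⟩ := hr.exists_walk_length_eq_dist
  cases w with
  | nil => exact absurd rfl hz
  | cons h p =>
    obtain rfl : _ = a' := by simpa [ha] using (G.mem_neighborSet _ _).mpr h
    refine le_antisymm ?_ ?_
    · calc G.dist a z ≤ G.dist a _ + G.dist _ z := h.reachable.dist_triangle_left z
        _ = G.dist _ z + 1 := by rw [dist_eq_one_iff_adj.mpr h, add_comm]
    · rw [← hw, Walk.length_cons]
      exact Nat.add_le_add_right (dist_le p) 1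

lemma edgeDist_add_ite_of_neighborSet_eq (hG : G.Preconnected) (ha : G.neighborSet a = {a'})
    (z : V) : G.edgeDist s(a, a') z + (if z = a then 0 else 1) = G.dist a z := by
  rw [edgeDist_mk]
  split_ifs with hz
  · subst hz
    simp
  · rw [(hG a z).dist_eq_dist_add_one_of_neighborSet_eq hz ha]
    omega

end Leaf

section BoxProd

variable {α β : Type*} {G : SimpleGraph α} {H : SimpleGraph β}

lemma dist_boxProd (hG : G.Preconnected) (hH : H.Preconnected) (x y : α × β) :
    (G □ H).dist x y = G.dist x.1 y.1 + H.dist x.2 y.2 := by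
  have hxy : (G □ H).Reachable x y := reachable_boxProd.mpr ⟨hG _ _, hH _ _⟩
  have h := edist_boxProd (G := G) (H := H) x y
  rw [← hxy.coe_dist_eq_edist, ← (hG _ _).coe_dist_eq_edist, ← (hH _ _).coe_dist_eq_edist] at h
  exact_mod_cast h

lemma edgeDist_boxProd_left (hG : G.Preconnected) (hH : H.Preconnected) (a a' : α) (b : β)
    (z : α × β) :
    (G □ H).edgeDist s((a, b), (a', b)) z = G.edgeDist s(a, a') z.1 + H.dist b z.2 := by
  simp only [edgeDist_mk, dist_boxProd hG hH, min_add_add_right]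

lemma edgeDist_boxProd_right (hG : G.Preconnected) (hH : H.Preconnected) (a : α) (b b' : β)
    (z : α × β) :
    (G □ H).edgeDist s((a, b), (a, b')) z = G.dist a z.1 + H.edgeDist s(b, b') z.2 := by
  simp only [edgeDist_mk, dist_boxProd hG hH, min_add_add_left]

lemma edgeDist_boxProd_corner_ne_iff (hG : G.Preconnected) (hH : H.Preconnected) {a a' : α}
    {b b' : β} (ha : G.neighborSet a = {a'}) (hb : H.neighborSet b = {b'}) (z : α × β) :
    (G □ H).edgeDist s((a, b), (a', b)) z ≠ (G □ H).edgeDist s((a, b), (a, b')) z ↔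
      ¬(z.1 = a ↔ z.2 = b) := by
  have hGz := edgeDist_add_ite_of_neighborSet_eq hG ha z.1
  have hHz := edgeDist_add_ite_of_neighborSet_eq hH hb z.2
  rw [edgeDist_boxProd_left hG hH, edgeDist_boxProd_right hG hH]
  by_cases h₁ : z.1 = a <;> by_cases h₂ : z.2 = b <;>
    simp only [h₁, h₂, if_true, if_false, iff_true, iff_false, not_true,
      not_false_eq_true, ne_eq, not_not] at hGz hHz ⊢ <;> omega

lemma card_filter_not_iff_le_two {a : Fin 2 → α} {b : Fin 2 → β} (ha : a 0 ≠ a 1)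
    (hb : b 0 ≠ b 1) (x : α) (y : β) : #{c : Fin 2 × Fin 2 | ¬(x = a c.1 ↔ y = b c.2)} ≤ 2 := by
  rw [card_filter]
  simp only [Fintype.sum_prod_type, Fin.sum_univ_two]
  by_cases hx : x = a 0 <;> by_cases hy : y = b 0 <;> simp_all <;> split_ifs <;> simp_all

theorem IsEdgeResolvingFunction.two_le_sum_of_boxProd [Fintype α] [Fintype β]
    (hG : G.Preconnected) (hH : H.Preconnected) {a a' : Fin 2 → α} {b b' : Fin 2 → β}
    (ha : ∀ i, G.neighborSet (a i) = {a' i}) (hb : ∀ j, H.neighborSet (b j) = {b' j})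
    (ha₀₁ : a 0 ≠ a 1) (hb₀₁ : b 0 ≠ b 1) {g : α × β → ℝ}
    (hg : (G □ H).IsEdgeResolvingFunction g) : 2 ≤ ∑ v, g v := by
  have hGadj (i) : G.Adj (a i) (a' i) := by simp [← mem_neighborSet, ha i]
  have hHadj (j) : H.Adj (b j) (b' j) := by simp [← mem_neighborSet, hb j]
  have key := hg.card_le_mul_sum (ι := Fin 2 × Fin 2)
    (e₁ := fun c => s((a c.1, b c.2), (a' c.1, b c.2)))
    (e₂ := fun c => s((a c.1, b c.2), (a c.1, b' c.2)))
    (fun c => boxProd_adj_left.mpr (hGadj c.1)) (fun c => boxProd_adj_right.mpr (hHadj c.2))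
    (fun c h => (hGadj c.1).ne (congrArg Prod.fst (Sym2.congr_right.mp h)).symm) (m := 2)
    (fun z => by
      simp only [edgeDist_boxProd_corner_ne_iff hG hH (ha _) (hb _)]
      exact card_filter_not_iff_le_two ha₀₁ hb₀₁ z.1 z.2)
  norm_num at key
  linarith

end BoxProd

section Path

variable {n : ℕ}

lemma Walk.natDist_le_length_of_pathGraph {i j : Fin n} (w : (pathGraph n).Walk i j) :
    Nat.dist i j ≤ w.length := by
  induction w with
  | nil => simp
  | cons h _ ih =>
    rw [Walk.length_cons]
    have := pathGraph_adj.mp h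
    simp only [Nat.dist] at ih ⊢
    omega

lemma pathGraph_dist (i j : Fin n) : (pathGraph n).dist i j = Nat.dist i j := by
  refine le_antisymm ?_ ?_
  · induction hk : Nat.dist i j generalizing i with
    | zero => simp [Fin.ext (Nat.eq_of_dist_eq_zero hk)]
    | succ k ih =>
      obtain ⟨i', hii', hi'j⟩ : ∃ i', (pathGraph n).Adj i i' ∧ Nat.dist i' j = k := by
        simp only [Nat.dist] at hk
        rcases lt_or_gt_of_ne (fun h : (i : ℕ) = j => by omega) with h | h
        · exact ⟨⟨i + 1, by omega⟩, pathGraph_adj.mpr (by simp), by simp only [Nat.dist]; omega⟩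
        · exact ⟨⟨i - 1, by omega⟩, pathGraph_adj.mpr (by simp; omega),
            by simp only [Nat.dist]; omega⟩
      calc (pathGraph n).dist i j ≤ (pathGraph n).dist i i' + (pathGraph n).dist i' j :=
            hii'.reachable.dist_triangle_left j
        _ ≤ 1 + k := by rw [dist_eq_one_iff_adj.mpr hii']; exact Nat.add_le_add_left (ih i' hi'j) 1
        _ = k + 1 := add_comm 1 k
  · obtain ⟨w, hw⟩ := (pathGraph_preconnected n i j).exists_walk_length_eq_dist
    exact hw ▸ w.natDist_le_length_of_pathGraph

lemma pathGraph_neighborSet_ends (i : Fin 2) :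
    (pathGraph (n + 2)).neighborSet (![0, Fin.last (n + 1)] i) =
      {![1, (Fin.last n).castSucc] i} := by
  ext v
  fin_cases i <;>
    simp only [Fin.zero_eta, Fin.mk_one, Matrix.cons_val_zero, Matrix.cons_val_one, mem_neighborSet,
      pathGraph_adj, Set.mem_singleton_iff, Fin.ext_iff, Fin.val_zero, Fin.val_one, Fin.val_last,
      Fin.val_castSucc] <;>
    omega

end Path

section Grid

variable {s t : ℕ}

lemma edgeDist_grid (p q z : Fin s × Fin t) :
    (pathGraph s □ pathGraph t).edgeDist s(p, q) z =
      min (Nat.dist p.1 z.1 + Nat.dist p.2 z.2) (Nat.dist q.1 z.1 + Nat.dist q.2 z.2) := by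
  simp only [edgeDist_mk, dist_boxProd (pathGraph_preconnected s) (pathGraph_preconnected t),
    pathGraph_dist]

lemma exists_eq_mk_of_mem_edgeSet_grid {e : Sym2 (Fin s × Fin t)}
    (he : e ∈ (pathGraph s □ pathGraph t).edgeSet) :
    ∃ p q : Fin s × Fin t, e = s(p, q) ∧
      ((p.1 : ℕ) + 1 = q.1 ∧ p.2 = q.2 ∨ p.1 = q.1 ∧ (p.2 : ℕ) + 1 = q.2) := by
  induction e with
  | _ p q =>
    rcases boxProd_adj.mp he with ⟨h, h₂⟩ | ⟨h, h₁⟩ <;> rcases pathGraph_adj.mp h with h | h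
    · exact ⟨p, q, rfl, .inl ⟨h, h₂⟩⟩
    · exact ⟨q, p, Sym2.eq_swap, .inl ⟨h, h₂.symm⟩⟩
    · exact ⟨p, q, rfl, .inr ⟨h₁, h⟩⟩
    · exact ⟨q, p, Sym2.eq_swap, .inr ⟨h₁.symm, h⟩⟩

/-- In `P_s □ P_t`, an edge with lower endpoint `(i, j)` is at distances `(i + j, s - 2 - i + j)`
from the two bottom corners if it is horizontal and `(i + j, s - 1 - i + j)` if it is vertical:
the parity of the sum gives the direction, and then the distances give `(i, j)`. -/
lemma isEdgeResolvingSet_grid (m n : ℕ) :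
    (pathGraph (m + 2) □ pathGraph (n + 2)).IsEdgeResolvingSet
      ↑({(0, 0), (Fin.last (m + 1), 0)} : Finset (Fin (m + 2) × Fin (n + 2))) := by
  intro e₁ he₁ e₂ he₂ hne
  by_contra! h
  obtain ⟨p, q, rfl, hpq⟩ := exists_eq_mk_of_mem_edgeSet_grid he₁
  obtain ⟨p', q', rfl, hpq'⟩ := exists_eq_mk_of_mem_edgeSet_grid he₂
  have h₀ := h (0, 0) (by simp)
  have h₁ := h (Fin.last (m + 1), 0) (by simp)
  simp only [edgeDist_grid, Nat.dist, Fin.val_zero, Fin.val_last, Nat.sub_zero, Nat.zero_sub,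
    add_zero] at h₀ h₁
  simp only [Fin.ext_iff] at hpq hpq'
  have := p.1.isLt; have := p'.1.isLt
  obtain ⟨rfl, rfl⟩ : p = p' ∧ q = q' := by
    simp only [Prod.ext_iff, Fin.ext_iff]
    rcases hpq with ⟨_, _⟩ | ⟨_, _⟩ <;> rcases hpq' with ⟨_, _⟩ | ⟨_, _⟩
    all_goals omega
  exact hne rfl

lemma IsEdgeResolvingFunction.two_le_sum_of_grid {m n : ℕ} {g : Fin (m + 2) × Fin (n + 2) → ℝ}
    (hg : (pathGraph (m + 2) □ pathGraph (n + 2)).IsEdgeResolvingFunction g) : 2 ≤ ∑ v, g v :=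
  hg.two_le_sum_of_boxProd (pathGraph_preconnected _) (pathGraph_preconnected _)
    pathGraph_neighborSet_ends pathGraph_neighborSet_ends (by simp) (by simp)

end Grid

end SimpleGraph

/-- For `s, t ≥ 2`, the grid graph `P_s □ P_t` satisfies `edim_f(P_s □ P_t) = 2`. -/
theorem stmt_18 (s t : ℕ) (hs : 2 ≤ s) (ht : 2 ≤ t) :
    ((SimpleGraph.pathGraph s).boxProd (SimpleGraph.pathGraph t)).edimf = 2 := by
  obtain ⟨m, rfl⟩ := Nat.exists_eq_add_of_le' hs
  obtain ⟨n, rfl⟩ := Nat.exists_eq_add_of_le' ht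
  refine IsLeast.csInf_eq ⟨?_, ?_⟩
  · simpa [Prod.ext_iff] using
      (SimpleGraph.isEdgeResolvingSet_grid m n).exists_isEdgeResolvingFunction_sum_eq_card
  · rintro _ ⟨g, hg, rfl⟩
    exact hg.two_le_sum_of_grid
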